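/- Triangle inequality for energetic costs: let G = (V, A, c) be a finite weighted directed graph with no negative cycles, B > 0, and s ∈ V. Then for every arc uv ∈ A, δ_B(s, v) ≤ δ_B(s, u) ⊕_B c(uv). -/

import Mathlib

open scoped Classical

/-- The clamped addition `x ⊕_B y = [x + y]₀ᴮ` on `ℝ ∪ {∞}` (modeled inside `EReal`;
inputs are never `⊥`). -/
noncomputable def eplus (B : ℝ) (x y : EReal) : EReal :=
  if x + y < 0 then 0 else if x + y ≤ (B : EReal) then x + y else ⊤

/-- `batt B b cst i` is the charge `b_i` of the battery after traversing the first `i`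
arcs of a path whose `i`-th arc (0-indexed) has cost `cst i`, starting from charge `b`. -/
noncomputable def batt (B b : ℝ) (cst : ℕ → ℝ) : ℕ → ℝ
  | 0 => b
  | i + 1 => min (batt B b cst i - cst i) B

/-- The path with arc costs `cst 0, …, cst (k-1)` is traversable from initial charge `b`. -/
def Trav (B b : ℝ) (cst : ℕ → ℝ) (k : ℕ) : Prop :=
  ∀ i, i < k → cst i ≤ batt B b cst i

/-- The energetic cost `d_{B,b}(P) = b - b_k` of a path with arc costs
`cst 0, …, cst (k-1)`, or `∞` if not traversable from initial charge `b`. -/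
noncomputable def dE (B b : ℝ) (cst : ℕ → ℝ) (k : ℕ) : EReal :=
  if Trav B b cst k then ((b - batt B b cst k : ℝ) : EReal) else ⊤

/-- `u 0, u 1, …, u k` is a path in the graph with arc relation `Arc`. -/
def IsPath {V : Type*} (Arc : V → V → Prop) (u : ℕ → V) (k : ℕ) : Prop :=
  ∀ i, i < k → Arc (u i) (u (i + 1))

/-- The energetic cost `δ_{B,b}(s,t)`: the minimum of `d_{B,b}(P)` over all `s`–`t`
paths `P` (`∞` if there is none). -/
noncomputable def deltaE {V : Type*} (Arc : V → V → Prop) (c : V → V → ℝ)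
    (B b : ℝ) (s t : V) : EReal :=
  sInf { x : EReal | ∃ (u : ℕ → V) (k : ℕ), IsPath Arc u k ∧ u 0 = s ∧ u k = t ∧
    x = dE B b (fun i => c (u i) (u (i + 1))) k }

/-- The standard distance `δ(s,t)`: the infimum of total costs of `s`–`t` paths. -/
noncomputable def distE {V : Type*} (Arc : V → V → Prop) (c : V → V → ℝ)
    (s t : V) : EReal :=
  sInf { x : EReal | ∃ (u : ℕ → V) (k : ℕ), IsPath Arc u k ∧ u 0 = s ∧ u k = t ∧
    x = ((∑ i ∈ Finset.range k, c (u i) (u (i + 1)) : ℝ) : EReal) }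

/-- The graph has no negative cycles. -/
def NoNegCycles {V : Type*} (Arc : V → V → Prop) (c : V → V → ℝ) : Prop :=
  ∀ (u : ℕ → V) (k : ℕ), IsPath Arc u k → u k = u 0 → 1 ≤ k →
    0 ≤ ∑ i ∈ Finset.range k, c (u i) (u (i + 1))

/-!
Removing a cycle from a path never increases its energetic cost: along a cycle of nonnegative
total cost the charge cannot increase, and the charge after any further arc is monotone in the
charge before it. Hence every path to `u` is dominated by one of length at most `|V|`, so the
minimum defining `δ_B(s, u)` is attained, and appending the arc `uv` to a minimising path costs
exactly `δ_B(s, u) ⊕_B c(uv)`. The minimum must be attained: `x ↦ x ⊕_B c` jumps from `B` to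
`∞` at `x = B - c`, so an infimum approached from above would not do.
-/

open Finset

section Battery

variable {B b : ℝ} {d e : ℕ → ℝ}

lemma batt_congr {m : ℕ} (h : ∀ r < m, d r = e r) : batt B b d m = batt B b e m := by
  induction m with
  | zero => rfl
  | succ m ih => simp only [batt, ih fun r hr => h r (by omega), h m (by omega)]

lemma trav_congr {k : ℕ} (h : ∀ r < k, d r = e r) : Trav B b d k ↔ Trav B b e k := by
  refine forall₂_congr fun i hi => ?_
  rw [h i hi, batt_congr fun r hr => h r (by omega)]

lemma dE_congr {k : ℕ} (h : ∀ r < k, d r = e r) : dE B b d k = dE B b e k := by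
  simp only [dE, trav_congr h, batt_congr h]

lemma batt_mono_init {b' : ℝ} (hb : b ≤ b') (d : ℕ → ℝ) (m : ℕ) :
    batt B b d m ≤ batt B b' d m := by
  induction m with
  | zero => exact hb
  | succ m ih => exact min_le_min (by linarith) le_rfl

lemma batt_add (p m : ℕ) :
    batt B b d (p + m) = batt B (batt B b d p) (fun r => d (p + r)) m := by
  induction m with
  | zero => rfl
  | succ m ih =>
    show batt B b d (p + m + 1) = _
    simp only [batt, ih]

lemma batt_le_sub_sum (m : ℕ) : batt B b d m ≤ b - ∑ r ∈ range m, d r := by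
  induction m with
  | zero => simp [batt]
  | succ m ih =>
    rw [sum_range_succ]
    exact (min_le_left _ _).trans (by linarith)

lemma batt_le_capacity (hb : b ≤ B) : ∀ m, batt B b d m ≤ B
  | 0 => hb
  | _ + 1 => min_le_right _ _

lemma trav_succ_iff {k : ℕ} : Trav B b d (k + 1) ↔ Trav B b d k ∧ d k ≤ batt B b d k := by
  simp only [Trav, Nat.lt_succ_iff_lt_or_eq, or_imp, forall_and, forall_eq]

end Battery

lemma eplus_top_left (B c : ℝ) : eplus B ⊤ c = ⊤ := by
  simp [eplus]

lemma eplus_coe_coe (B x y : ℝ) :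
    eplus B x y = if x + y < 0 then 0 else if x + y ≤ B then ((x + y : ℝ) : EReal) else ⊤ := by
  simp only [eplus, ← EReal.coe_add, ← EReal.coe_zero, EReal.coe_lt_coe_iff,
    EReal.coe_le_coe_iff]

lemma dE_succ {B : ℝ} (hB : 0 ≤ B) (d : ℕ → ℝ) (k : ℕ) :
    dE B B d (k + 1) = eplus B (dE B B d k) (d k) := by
  by_cases hT : Trav B B d k
  swap
  · simp only [dE, trav_succ_iff, hT, false_and, if_false, eplus_top_left]
  set x := batt B B d k
  have hcap : x ≤ B := batt_le_capacity le_rfl k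
  simp only [dE, trav_succ_iff, hT, true_and, if_true, batt, eplus_coe_coe]
  rcases lt_or_ge (B - x + d k) 0 with hneg | hnonneg
  · rw [if_pos (by linarith), min_eq_right (by linarith), if_pos hneg, sub_self, EReal.coe_zero]
  rcases le_or_gt (B - x + d k) B with hle | hgt
  · rw [if_pos (by linarith), min_eq_left (by linarith), if_neg hnonneg.not_gt, if_pos hle]
    ring_nf
  · rw [if_neg (by linarith), if_neg hnonneg.not_gt, if_neg hgt.not_ge]

lemma dE_skip_le {b : ℝ} {d : ℕ → ℝ} {i n q : ℕ} (hcyc : 0 ≤ ∑ r ∈ range n, d (i + r)) :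
    dE B b (fun m => if m < i then d m else d (m + n)) (i + q) ≤ dE B b d (i + n + q) := by
  set d' : ℕ → ℝ := fun m => if m < i then d m else d (m + n)
  have hpre : ∀ m ≤ i, batt B b d' m = batt B b d m :=
    fun m hm => batt_congr fun r hr => if_pos (by omega)
  have hsuf : ∀ r, batt B b d (i + n + r) ≤ batt B b d' (i + r) := fun r => by
    have hcycle : batt B b d (i + n) ≤ batt B b d i := by
      rw [batt_add i n]
      linarith [batt_le_sub_sum (B := B) (b := batt B b d i) (d := fun r => d (i + r)) n]
    rw [batt_add (i + n) r, batt_add (d := d') i r, hpre i le_rfl]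
    refine (batt_mono_init hcycle _ r).trans_eq (batt_congr fun m _ => ?_)
    simp only [d', if_neg (show ¬ i + m < i by omega), Nat.add_right_comm]
  by_cases hT : Trav B b d (i + n + q)
  · have hT' : Trav B b d' (i + q) := by
      intro m hm
      rcases lt_or_ge m i with hmi | hmi
      · rw [hpre m hmi.le, show d' m = d m from if_pos hmi]
        exact hT m (by omega)
      · obtain ⟨r, rfl⟩ := Nat.exists_eq_add_of_le hmi
        rw [show d' (i + r) = d (i + n + r) by simp [d', Nat.add_right_comm]]
        exact (hT _ (by omega)).trans (hsuf r)
    rw [dE, dE, if_pos hT, if_pos hT']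
    exact EReal.coe_le_coe_iff.2 (by linarith [hsuf q])
  · simp only [dE, if_neg hT, le_top]

lemma sInf_mem_of_finite_dominating {α : Type*} [CompleteLinearOrder α] {S T : Set α}
    (hT : T.Finite) (hTS : T ⊆ S) (hdom : ∀ x ∈ S, ∃ y ∈ T, y ≤ x) (hS : S.Nonempty) :
    sInf S ∈ S := by
  obtain ⟨x, hx⟩ := hS
  obtain ⟨y, hy, -⟩ := hdom x hx
  have hST : sInf S = sInf T := le_antisymm (sInf_le_sInf hTS) <| le_sInf fun x hx =>
    let ⟨y, hy, hyx⟩ := hdom x hx; (sInf_le hy).trans hyx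
  exact hST ▸ hTS (Set.Nonempty.csInf_mem ⟨y, hy⟩ hT)

section Paths

variable {V : Type*} {Arc : V → V → Prop} {c : V → V → ℝ}

def arcCosts (c : V → V → ℝ) (w : ℕ → V) : ℕ → ℝ := fun i => c (w i) (w (i + 1))

def pathSnoc (w : ℕ → V) (k : ℕ) (v : V) : ℕ → V := fun m => if m ≤ k then w m else v

/-- The path `w` with the closed walk `w i, …, w (i + n)` cut out. -/
def pathSkip (w : ℕ → V) (i n : ℕ) : ℕ → V := fun m => if m ≤ i then w m else w (m + n)

lemma isPath_pathSnoc {w : ℕ → V} {k : ℕ} {v : V} (hw : IsPath Arc w k) (hv : Arc (w k) v) :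
    IsPath Arc (pathSnoc w k v) (k + 1) := by
  intro m hm
  rcases Nat.lt_succ_iff_lt_or_eq.1 hm with hm | rfl
  · simpa [pathSnoc, hm.le, Nat.succ_le_of_lt hm] using hw m hm
  · simpa [pathSnoc] using hv

lemma dE_pathSnoc {B : ℝ} (hB : 0 ≤ B) (w : ℕ → V) (k : ℕ) (v : V) :
    dE B B (arcCosts c (pathSnoc w k v)) (k + 1) =
      eplus B (dE B B (arcCosts c w) k) (c (w k) v) := by
  have hpre : ∀ r < k, arcCosts c (pathSnoc w k v) r = arcCosts c w r := fun r hr => by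
    simp [arcCosts, pathSnoc, hr.le, Nat.succ_le_of_lt hr]
  rw [dE_succ hB, dE_congr hpre]
  simp [arcCosts, pathSnoc]

lemma arcCosts_pathSkip {w : ℕ → V} {i n : ℕ} (hrep : w i = w (i + n)) :
    arcCosts c (pathSkip w i n) =
      fun m => if m < i then arcCosts c w m else arcCosts c w (m + n) := by
  funext m
  rcases lt_trichotomy m i with hm | rfl | hm
  · simp [arcCosts, pathSkip, hm, hm.le, Nat.succ_le_of_lt hm]
  · simp [arcCosts, pathSkip, hrep, Nat.add_right_comm]
  · simp [arcCosts, pathSkip, hm.not_ge, (hm.trans (Nat.lt_succ_self m)).not_ge,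
      hm.not_gt, Nat.add_right_comm]

lemma isPath_pathSkip {w : ℕ → V} {i n q : ℕ} (hw : IsPath Arc w (i + n + q))
    (hrep : w i = w (i + n)) : IsPath Arc (pathSkip w i n) (i + q) := by
  intro m hm
  rcases lt_trichotomy m i with hmi | rfl | hmi
  · simpa [pathSkip, hmi.le, Nat.succ_le_of_lt hmi] using hw m (by omega)
  · simpa [pathSkip, hrep, Nat.add_right_comm] using hw (m + n) (by omega)
  · simpa [pathSkip, hmi.not_ge, (hmi.trans (Nat.lt_succ_self m)).not_ge,
      Nat.add_right_comm] using hw (m + n) (by omega)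

lemma pathSkip_add {w : ℕ → V} {i n : ℕ} (hrep : w i = w (i + n)) (q : ℕ) :
    pathSkip w i n (i + q) = w (i + n + q) := by
  rcases q.eq_zero_or_pos with rfl | hq
  · simp [pathSkip, hrep]
  · simp [pathSkip, show ¬ i + q ≤ i by omega, Nat.add_right_comm]

lemma exists_shorter_path_of_repeat (hNC : NoNegCycles Arc c) (B : ℝ) {w : ℕ → V}
    {k i j : ℕ} (hw : IsPath Arc w k) (hij : i < j) (hjk : j ≤ k) (hrep : w i = w j) :
    ∃ w' k', k' < k ∧ IsPath Arc w' k' ∧ w' 0 = w 0 ∧ w' k' = w k ∧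
      dE B B (arcCosts c w') k' ≤ dE B B (arcCosts c w) k := by
  obtain ⟨n, rfl⟩ := Nat.exists_eq_add_of_le hij.le
  obtain ⟨q, rfl⟩ := Nat.exists_eq_add_of_le hjk
  have hcyc : 0 ≤ ∑ r ∈ range n, arcCosts c w (i + r) :=
    hNC (fun r => w (i + r)) n (fun r hr => hw (i + r) (by omega)) hrep.symm (by omega)
  refine ⟨pathSkip w i n, i + q, by omega, isPath_pathSkip hw hrep, by simp [pathSkip],
    pathSkip_add hrep q, ?_⟩
  rw [arcCosts_pathSkip hrep]
  exact dE_skip_le hcyc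

lemma exists_repeat_of_card_lt [Fintype V] {w : ℕ → V} {k : ℕ} (hk : Fintype.card V < k) :
    ∃ i j, i < j ∧ j ≤ k ∧ w i = w j := by
  obtain ⟨a, ha, b, hb, hab, heq⟩ := exists_ne_map_eq_of_card_lt_of_maps_to
    (s := range (k + 1)) (t := univ) (f := w) (by simp; omega)
    (fun _ _ => mem_coe.2 (mem_univ _))
  rw [mem_range] at ha hb
  rcases lt_or_gt_of_ne hab with h | h
  · exact ⟨a, b, h, by omega, heq⟩
  · exact ⟨b, a, h, by omega, heq.symm⟩

lemma exists_short_path_dE_le [Fintype V] (hNC : NoNegCycles Arc c) (B : ℝ) (k : ℕ) :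
    ∀ w, IsPath Arc w k → ∃ w' k', k' ≤ Fintype.card V ∧ IsPath Arc w' k' ∧ w' 0 = w 0 ∧
      w' k' = w k ∧ dE B B (arcCosts c w') k' ≤ dE B B (arcCosts c w) k := by
  induction k using Nat.strong_induction_on with
  | _ k ih =>
  intro w hw
  by_cases hk : k ≤ Fintype.card V
  · exact ⟨w, k, hk, hw, rfl, rfl, le_rfl⟩
  obtain ⟨i, j, hij, hjk, hrep⟩ := exists_repeat_of_card_lt (w := w) (not_le.1 hk)
  obtain ⟨w₁, k₁, hk₁, hw₁, h0₁, hend₁, hle₁⟩ :=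
    exists_shorter_path_of_repeat hNC B hw hij hjk hrep
  obtain ⟨w₂, k₂, hk₂, hw₂, h0₂, hend₂, hle₂⟩ := ih k₁ hk₁ w₁ hw₁
  exact ⟨w₂, k₂, hk₂, hw₂, h0₂.trans h0₁, hend₂.trans hend₁, hle₂.trans hle₁⟩

lemma finite_dE_of_length_le [Finite V] (B : ℝ) (n : ℕ) :
    { x : EReal | ∃ (w : ℕ → V) (k : ℕ), k ≤ n ∧ x = dE B B (arcCosts c w) k }.Finite := by
  refine (Set.finite_range fun p : Fin (n + 1) × (Fin (n + 1) → V) =>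
    dE B B (arcCosts c fun m => p.2 ⟨min m n, by omega⟩) p.1).subset ?_
  rintro x ⟨w, k, hk, rfl⟩
  refine ⟨(⟨k, by omega⟩, fun m => w m), dE_congr fun r hr => ?_⟩
  simp [arcCosts, min_eq_left (show r ≤ n by omega), min_eq_left (show r + 1 ≤ n by omega)]

lemma exists_path_dE_eq_deltaE [Fintype V] (hNC : NoNegCycles Arc c) (B : ℝ) {s t : V}
    (hreach : ∃ (w : ℕ → V) (k : ℕ), IsPath Arc w k ∧ w 0 = s ∧ w k = t) :
    ∃ (w : ℕ → V) (k : ℕ), IsPath Arc w k ∧ w 0 = s ∧ w k = t ∧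
      dE B B (arcCosts c w) k = deltaE Arc c B B s t := by
  obtain ⟨w, k, hw, hs, ht⟩ := hreach
  have hmem : deltaE Arc c B B s t ∈ { x : EReal | ∃ (w : ℕ → V) (k : ℕ), IsPath Arc w k ∧
      w 0 = s ∧ w k = t ∧ x = dE B B (arcCosts c w) k } := by
    refine sInf_mem_of_finite_dominating (T := { x | ∃ (w : ℕ → V) (k : ℕ),
      k ≤ Fintype.card V ∧ IsPath Arc w k ∧ w 0 = s ∧ w k = t ∧ x = dE B B (arcCosts c w) k })
      ?_ ?_ ?_ ⟨_, w, k, hw, hs, ht, rfl⟩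
    · exact (finite_dE_of_length_le B _).subset fun _ ⟨w, k, hk, _, _, _, hx⟩ => ⟨w, k, hk, hx⟩
    · rintro _ ⟨w, k, -, hw, hs, ht, rfl⟩
      exact ⟨w, k, hw, hs, ht, rfl⟩
    · rintro _ ⟨w, k, hw, rfl, rfl, rfl⟩
      obtain ⟨w', k', hk', hw', hs', ht', hle⟩ := exists_short_path_dE_le hNC B k w hw
      exact ⟨_, ⟨w', k', hk', hw', hs', ht', rfl⟩, hle⟩
  obtain ⟨w', k', hw', hs', ht', hmin⟩ := hmem
  exact ⟨w', k', hw', hs', ht', hmin.symm⟩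

lemma deltaE_le_dE {B b : ℝ} {w : ℕ → V} {k : ℕ} (hw : IsPath Arc w k) :
    deltaE Arc c B b (w 0) (w k) ≤ dE B b (arcCosts c w) k :=
  sInf_le ⟨w, k, hw, rfl, rfl, rfl⟩

lemma deltaE_eq_top {B b : ℝ} {s t : V}
    (h : ¬ ∃ (w : ℕ → V) (k : ℕ), IsPath Arc w k ∧ w 0 = s ∧ w k = t) :
    deltaE Arc c B b s t = ⊤ :=
  sInf_eq_top.2 fun _ ⟨w, k, hw, hs, ht, _⟩ => (h ⟨w, k, hw, hs, ht⟩).elim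

end Paths

/-- triangle inequality for energetic costs: in a finite graph with no
negative cycles, for every arc `uv`, `δ_B(s,v) ≤ δ_B(s,u) ⊕_B c(uv)`. -/
theorem delta_triangle {V : Type*} [Fintype V] (Arc : V → V → Prop)
    (c : V → V → ℝ) (hNC : NoNegCycles Arc c) (B : ℝ) (hB : 0 < B) (s : V)
    (u v : V) (huv : Arc u v) :
    deltaE Arc c B B s v ≤ eplus B (deltaE Arc c B B s u) ((c u v : ℝ) : EReal) := by
  by_cases hreach : ∃ (w : ℕ → V) (k : ℕ), IsPath Arc w k ∧ w 0 = s ∧ w k = u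
  · obtain ⟨w, k, hw, rfl, rfl, hopt⟩ := exists_path_dE_eq_deltaE hNC B hreach
    calc deltaE Arc c B B (w 0) v
        = deltaE Arc c B B (pathSnoc w k v 0) (pathSnoc w k v (k + 1)) := by simp [pathSnoc]
      _ ≤ dE B B (arcCosts c (pathSnoc w k v)) (k + 1) := deltaE_le_dE (isPath_pathSnoc hw huv)
      _ = eplus B (deltaE Arc c B B (w 0) (w k)) (c (w k) v) := by
        rw [dE_pathSnoc hB.le, hopt]
  · rw [deltaE_eq_top hreach, eplus_top_left]
    exact le_top
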